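/- Let φ : X̂ → ℝ be continuous, bi-scaling-invariant, G-invariant and g̃-admissible. Then for all real numbers x_0,…,x_k, x_{k+2},…,x_m > 0, (φ−ψ̃)((x_0,x_1,…,x_k,1,x_{k+2},…,x_m),(x_0,x_1,…,x_k)) ≥ (φ−ψ̃)((η,…,η,1,x_{k+2},…,x_m),(1,…,1)), where η = (x_0 x_1⋯x_k)^{1/(k+1)} occupies the first k+1 coordinates of the first vector. -/

import Mathlib

open Complex MeasureTheory Finset

noncomputable section

/-- Squared norm of a complex vector. -/
def nsq {n : ℕ} (z : Fin n → ℂ) : ℝ := ∑ i, ‖z i‖ ^ 2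

/-- Laplacian at a point of a real-valued function of one complex variable. -/
def lap (f : ℂ → ℝ) (t : ℂ) : ℝ :=
  lineDeriv ℝ (fun s => lineDeriv ℝ f s 1) t 1 +
  lineDeriv ℝ (fun s => lineDeriv ℝ f s Complex.I) t Complex.I

/-- The point of `Fin (m+1)` corresponding to an index in `{0,...,k}`. -/
def embX (m k : ℕ) (hkm : k ≤ m) (i : Fin (k + 1)) : Fin (m + 1) :=
  ⟨(i : ℕ), by have := i.isLt; omega⟩

/-- Points of `(ℂ^{m+1}\{0}) × (ℂ^{k+1}\{0})` lifting the blow-up X. -/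
def inXhat (m k : ℕ) (hkm : k ≤ m)
    (p : (Fin (m + 1) → ℂ) × (Fin (k + 1) → ℂ)) : Prop :=
  p.1 ≠ 0 ∧ p.2 ≠ 0 ∧
    ∀ i j : Fin (k + 1),
      p.1 (embX m k hkm i) * p.2 j = p.1 (embX m k hkm j) * p.2 i

def psiX1 (m k : ℕ) (p : (Fin (m + 1) → ℂ) × (Fin (k + 1) → ℂ)) : ℝ :=
  Real.log
    ((∏ i ∈ Finset.univ.filter (fun i : Fin (m + 1) => (i : ℕ) ≤ k),
        ‖p.1 i‖) ^ (2 * ((m : ℝ) + 1 - (k : ℝ)) / ((k : ℝ) + 1)) *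
      (∏ j : Fin (k + 1), ‖p.2 j‖) ^ (2 * (k : ℝ) / ((k : ℝ) + 1)) /
      (nsq p.1 ^ ((m : ℝ) + 1 - (k : ℝ)) * nsq p.2 ^ (k : ℝ)))

def psiX2 (m k : ℕ) (p : (Fin (m + 1) → ℂ) × (Fin (k + 1) → ℂ)) : ℝ :=
  Real.log
    ((∏ i ∈ Finset.univ.filter (fun i : Fin (m + 1) => k + 1 ≤ (i : ℕ)),
        ‖p.1 i‖) ^ (2 * ((m : ℝ) + 1 - (k : ℝ)) / ((m : ℝ) - (k : ℝ))) *
      (∏ j : Fin (k + 1), ‖p.2 j‖) ^ (2 * (k : ℝ) / ((k : ℝ) + 1)) /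
      (nsq p.1 ^ ((m : ℝ) + 1 - (k : ℝ)) * nsq p.2 ^ (k : ℝ)))

def psiX (m k : ℕ) (p : (Fin (m + 1) → ℂ) × (Fin (k + 1) → ℂ)) : ℝ :=
  min (psiX1 m k p) (psiX2 m k p)

/-- Bi-scaling invariance. -/
def BiScalInv (m k : ℕ) (φ : ((Fin (m + 1) → ℂ) × (Fin (k + 1) → ℂ)) → ℝ) : Prop :=
  ∀ lam mu : ℂ, lam ≠ 0 → mu ≠ 0 →
    ∀ p : (Fin (m + 1) → ℂ) × (Fin (k + 1) → ℂ), φ (lam • p.1, mu • p.2) = φ p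

/-- Invariance under the group G acting on X. -/
def GInvX (m k : ℕ) (hkm : k ≤ m)
    (φ : ((Fin (m + 1) → ℂ) × (Fin (k + 1) → ℂ)) → ℝ) : Prop :=
  (∀ i j : Fin (k + 1), ∀ p : (Fin (m + 1) → ℂ) × (Fin (k + 1) → ℂ),
      φ (p.1 ∘ Equiv.swap (embX m k hkm i) (embX m k hkm j), p.2 ∘ Equiv.swap i j) = φ p) ∧
  (∀ i j : Fin (m + 1), k + 1 ≤ (i : ℕ) → k + 1 ≤ (j : ℕ) →
      ∀ p : (Fin (m + 1) → ℂ) × (Fin (k + 1) → ℂ),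
      φ (p.1 ∘ Equiv.swap i j, p.2) = φ p) ∧
  (∀ l : Fin (k + 1), ∀ θ : ℝ, ∀ p : (Fin (m + 1) → ℂ) × (Fin (k + 1) → ℂ),
      φ (Function.update p.1 (embX m k hkm l)
            (Complex.exp ((θ : ℂ) * Complex.I) * p.1 (embX m k hkm l)),
         Function.update p.2 l (Complex.exp ((θ : ℂ) * Complex.I) * p.2 l)) = φ p) ∧
  (∀ l : Fin (m + 1), k + 1 ≤ (l : ℕ) → ∀ θ : ℝ,
      ∀ p : (Fin (m + 1) → ℂ) × (Fin (k + 1) → ℂ),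
      φ (Function.update p.1 l (Complex.exp ((θ : ℂ) * Complex.I) * p.1 l), p.2) = φ p)

/-- A vector tangent to the orbit of the bi-scaling action at p. -/
def tangentX (m k : ℕ) (p v : (Fin (m + 1) → ℂ) × (Fin (k + 1) → ℂ)) : Prop :=
  ∃ a b : ℂ, v = (a • p.1, b • p.2)

/-- Local potential of g̃ plus φ along a curve. -/
def FX (m k : ℕ) (φ : ((Fin (m + 1) → ℂ) × (Fin (k + 1) → ℂ)) → ℝ)
    (c : ℂ → (Fin (m + 1) → ℂ) × (Fin (k + 1) → ℂ)) (t : ℂ) : ℝ :=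
  ((m : ℝ) + 1 - (k : ℝ)) * Real.log (nsq (c t).1) +
    (k : ℝ) * Real.log (nsq (c t).2) + φ (c t)

/-- g̃-admissibility. -/
def AdmX (m k : ℕ) (hkm : k ≤ m)
    (φ : ((Fin (m + 1) → ℂ) × (Fin (k + 1) → ℂ)) → ℝ) : Prop :=
  ∀ r : ℝ, 0 < r → ∀ c : ℂ → (Fin (m + 1) → ℂ) × (Fin (k + 1) → ℂ),
    DifferentiableOn ℂ c (Metric.ball 0 r) →
    (∀ t ∈ Metric.ball (0 : ℂ) r, inXhat m k hkm (c t)) →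
    ContDiffOn ℝ (⊤ : ℕ∞) (FX m k φ c) (Metric.ball 0 r) ∧
    (∀ t ∈ Metric.ball (0 : ℂ) r, 0 ≤ lap (FX m k φ c) t) ∧
    (∀ t ∈ Metric.ball (0 : ℂ) r, ¬ tangentX m k (c t) (deriv c t) →
      0 < lap (FX m k φ c) t)

section AuxStmt11

variable {m k : ℕ}

@[simp] lemma embX_val (hkm : k ≤ m) (j : Fin (k + 1)) :
    ((embX m k hkm j : Fin (m + 1)) : ℕ) = (j : ℕ) := rfl

/-- Inverse of `embX` on the head indices. -/
def hdX (m k : ℕ) (i : Fin (m + 1)) : Fin (k + 1) := ⟨min (i : ℕ) k, by omega⟩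

@[simp] lemma hdX_embX (hkm : k ≤ m) (j : Fin (k + 1)) :
    hdX m k (embX m k hkm j) = j := by
  have := j.isLt
  apply Fin.ext
  simp [hdX, embX]
  omega

lemma embX_hdX (hkm : k ≤ m) (i : Fin (m + 1)) (hi : (i : ℕ) ≤ k) :
    embX m k hkm (hdX m k i) = i := by
  apply Fin.ext
  simp [hdX, embX]
  omega

lemma nsq_pos {n : ℕ} (v : Fin (n + 1) → ℂ) (hv : ∀ i, v i ≠ 0) : 0 < nsq v := by
  refine Finset.sum_pos (fun i _ => ?_) Finset.univ_nonempty
  have : ‖v i‖ ≠ 0 := by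
    simpa using hv i
  positivity

lemma nsq_comp {n : ℕ} (v : Fin n → ℂ) (e : Equiv.Perm (Fin n)) : nsq (v ∘ e) = nsq v :=
  Equiv.sum_comp e (fun i => ‖v i‖ ^ 2)

lemma prod_head {M : Type*} [CommMonoid M] (hkm : k ≤ m) (g : Fin (m + 1) → M) :
    ∏ i ∈ Finset.univ.filter (fun i : Fin (m + 1) => (i : ℕ) ≤ k), g i
      = ∏ j : Fin (k + 1), g (embX m k hkm j) := by
  refine (Finset.prod_bij (fun j _ => embX m k hkm j) ?_ ?_ ?_ ?_).symm
  · intro j _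
    have := j.isLt
    simp [embX]
    omega
  · intro a _ b _ hab
    have : ((embX m k hkm a : Fin (m+1)) : ℕ) = ((embX m k hkm b : Fin (m+1)) : ℕ) := by
      rw [hab]
    exact Fin.ext (by simpa [embX] using this)
  · intro i hi
    simp only [Finset.mem_filter, Finset.mem_univ, true_and] at hi
    exact ⟨hdX m k i, Finset.mem_univ _, by exact embX_hdX hkm i hi⟩
  · intro j _; rfl

/-- The point of `X̂` with head coordinates `exp (s j)` and tail coordinates from `z`. -/
def Qpt (m k : ℕ) (z : Fin (m + 1) → ℂ) (s : Fin (k + 1) → ℝ) :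
    (Fin (m + 1) → ℂ) × (Fin (k + 1) → ℂ) :=
  (fun i => if (i : ℕ) ≤ k then Complex.exp ((s (hdX m k i) : ℂ)) else z i,
   fun j => Complex.exp ((s j : ℂ)))

/-- The local potential plus `φ`, as a function of the head exponents. -/
def Fq (m k : ℕ) (φ : ((Fin (m + 1) → ℂ) × (Fin (k + 1) → ℂ)) → ℝ)
    (z : Fin (m + 1) → ℂ) (s : Fin (k + 1) → ℝ) : ℝ :=
  ((m : ℝ) + 1 - (k : ℝ)) * Real.log (nsq (Qpt m k z s).1) +
    (k : ℝ) * Real.log (nsq (Qpt m k z s).2) + φ (Qpt m k z s)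

/-- Holomorphic curve through `Qpt` points. -/
def crvX (m k : ℕ) (z : Fin (m + 1) → ℂ) (s d : Fin (k + 1) → ℝ) (t : ℂ) :
    (Fin (m + 1) → ℂ) × (Fin (k + 1) → ℂ) :=
  (fun i => if (i : ℕ) ≤ k then
      Complex.exp ((s (hdX m k i) : ℂ) + (d (hdX m k i) : ℂ) * t) else z i,
   fun j => Complex.exp ((s j : ℂ) + (d j : ℂ) * t))

lemma crvX_real (z : Fin (m + 1) → ℂ) (s d : Fin (k + 1) → ℝ) (xr : ℝ) :
    crvX m k z s d (xr : ℂ) = Qpt m k z (fun j => s j + d j * xr) := by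
  unfold crvX Qpt
  refine Prod.ext ?_ ?_
  · funext i
    by_cases hi : (i : ℕ) ≤ k <;> simp [hi]
  · funext j
    simp

lemma crvX_diff (z : Fin (m + 1) → ℂ) (s d : Fin (k + 1) → ℝ) :
    Differentiable ℂ (crvX m k z s d) := by
  apply Differentiable.prodMk
  · rw [differentiable_pi]
    intro i
    by_cases hi : (i : ℕ) ≤ k
    · simp only [crvX, hi, if_true]
      exact Complex.differentiable_exp.comp (by fun_prop)
    · simp only [crvX, hi, if_false]
      exact differentiable_const _
  · rw [differentiable_pi]
    intro j
    exact Complex.differentiable_exp.comp (by fun_prop)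

lemma crvX_inXhat (hkm : k ≤ m) (z : Fin (m + 1) → ℂ) (s d : Fin (k + 1) → ℝ) (t : ℂ) :
    inXhat m k hkm (crvX m k z s d t) := by
  refine ⟨?_, ?_, ?_⟩
  · intro h
    have h0 := congrFun h ⟨0, by omega⟩
    simp only [crvX, Pi.zero_apply] at h0
    rw [if_pos (by simp)] at h0
    exact Complex.exp_ne_zero _ h0
  · intro h
    have h0 := congrFun h 0
    simp only [crvX, Pi.zero_apply] at h0
    exact Complex.exp_ne_zero _ h0
  · intro i j
    have hi : ((embX m k hkm i : Fin (m + 1)) : ℕ) ≤ k := by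
      have := i.isLt; simp [embX]; omega
    have hj : ((embX m k hkm j : Fin (m + 1)) : ℕ) ≤ k := by
      have := j.isLt; simp [embX]; omega
    simp only [crvX, hi, hj, if_pos, hdX_embX]
    ring

@[simp] lemma Qpt_fst_embX (hkm : k ≤ m) (z : Fin (m + 1) → ℂ) (s : Fin (k + 1) → ℝ)
    (j : Fin (k + 1)) :
    (Qpt m k z s).1 (embX m k hkm j) = Complex.exp ((s j : ℂ)) := by
  have hj : ((embX m k hkm j : Fin (m + 1)) : ℕ) ≤ k := by
    have := j.isLt; simp [embX]; omega
  show (if ((embX m k hkm j : Fin (m + 1)) : ℕ) ≤ k then _ else _) = _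
  rw [if_pos hj, hdX_embX]

lemma Qpt_swap (hkm : k ≤ m) (z : Fin (m + 1) → ℂ) (s : Fin (k + 1) → ℝ) (i j : Fin (k + 1)) :
    Qpt m k z (s ∘ Equiv.swap i j)
      = ((Qpt m k z s).1 ∘ Equiv.swap (embX m k hkm i) (embX m k hkm j),
         (Qpt m k z s).2 ∘ Equiv.swap i j) := by
  have hswap : ∀ l : Fin (m + 1), (l : ℕ) ≤ k →
      Equiv.swap (embX m k hkm i) (embX m k hkm j) l
        = embX m k hkm (Equiv.swap i j (hdX m k l)) := by
    intro l hl
    by_cases h1 : l = embX m k hkm i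
    · rw [h1, Equiv.swap_apply_left, hdX_embX, Equiv.swap_apply_left]
    · by_cases h2 : l = embX m k hkm j
      · rw [h2, Equiv.swap_apply_right, hdX_embX, Equiv.swap_apply_right]
      · rw [Equiv.swap_apply_of_ne_of_ne h1 h2]
        have h3 : Equiv.swap i j (hdX m k l) = hdX m k l := by
          apply Equiv.swap_apply_of_ne_of_ne
          · intro h; exact h1 (by rw [← embX_hdX hkm l hl, h])
          · intro h; exact h2 (by rw [← embX_hdX hkm l hl, h])
        rw [h3, embX_hdX hkm l hl]
  refine Prod.ext ?_ ?_
  · funext l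
    by_cases hl : (l : ℕ) ≤ k
    · show (if (l : ℕ) ≤ k then Complex.exp (((s ∘ Equiv.swap i j) (hdX m k l) : ℂ)) else z l)
        = (Qpt m k z s).1 (Equiv.swap (embX m k hkm i) (embX m k hkm j) l)
      rw [if_pos hl, hswap l hl, Qpt_fst_embX hkm]
      rfl
    · have h1 : l ≠ embX m k hkm i := by
        intro h; apply hl; rw [h]; have := i.isLt; simp [embX]; omega
      have h2 : l ≠ embX m k hkm j := by
        intro h; apply hl; rw [h]; have := j.isLt; simp [embX]; omega
      show (if (l : ℕ) ≤ k then _ else z l)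
        = (Qpt m k z s).1 (Equiv.swap (embX m k hkm i) (embX m k hkm j) l)
      rw [if_neg hl, Equiv.swap_apply_of_ne_of_ne h1 h2]
      show z l = if (l : ℕ) ≤ k then _ else z l
      rw [if_neg hl]
  · funext j'
    rfl

lemma Fq_swap (hkm : k ≤ m) (φ : ((Fin (m + 1) → ℂ) × (Fin (k + 1) → ℂ)) → ℝ)
    (hG1 : ∀ i j : Fin (k + 1), ∀ p : (Fin (m + 1) → ℂ) × (Fin (k + 1) → ℂ),
      φ (p.1 ∘ Equiv.swap (embX m k hkm i) (embX m k hkm j), p.2 ∘ Equiv.swap i j) = φ p)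
    (z : Fin (m + 1) → ℂ) (s : Fin (k + 1) → ℝ) (i j : Fin (k + 1)) :
    Fq m k φ z (s ∘ Equiv.swap i j) = Fq m k φ z s := by
  unfold Fq
  rw [Qpt_swap hkm z s i j]
  show ((m : ℝ) + 1 - (k : ℝ)) * Real.log (nsq ((Qpt m k z s).1 ∘ Equiv.swap (embX m k hkm i) (embX m k hkm j))) +
      (k : ℝ) * Real.log (nsq ((Qpt m k z s).2 ∘ Equiv.swap i j)) +
      φ ((Qpt m k z s).1 ∘ Equiv.swap (embX m k hkm i) (embX m k hkm j),
         (Qpt m k z s).2 ∘ Equiv.swap i j) = _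
  rw [nsq_comp, nsq_comp, hG1 i j (Qpt m k z s)]

lemma Fq_perm (hkm : k ≤ m) (φ : ((Fin (m + 1) → ℂ) × (Fin (k + 1) → ℂ)) → ℝ)
    (hG1 : ∀ i j : Fin (k + 1), ∀ p : (Fin (m + 1) → ℂ) × (Fin (k + 1) → ℂ),
      φ (p.1 ∘ Equiv.swap (embX m k hkm i) (embX m k hkm j), p.2 ∘ Equiv.swap i j) = φ p)
    (z : Fin (m + 1) → ℂ) (σ : Equiv.Perm (Fin (k + 1))) (s : Fin (k + 1) → ℝ) :
    Fq m k φ z (s ∘ σ) = Fq m k φ z s := by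
  revert s
  refine Equiv.Perm.swap_induction_on σ ?_ ?_
  · intro s; simp
  · intro f x y hxy ih s
    have h : s ∘ ⇑(Equiv.swap x y * f) = (s ∘ ⇑(Equiv.swap x y)) ∘ ⇑f := by
      funext a; simp [Equiv.Perm.mul_apply]
    rw [h, ih, Fq_swap hkm φ hG1 z s x y]

lemma phase_invX (hkm : k ≤ m) (φ : ((Fin (m + 1) → ℂ) × (Fin (k + 1) → ℂ)) → ℝ)
    (hG3 : ∀ l : Fin (k + 1), ∀ θ : ℝ, ∀ p : (Fin (m + 1) → ℂ) × (Fin (k + 1) → ℂ),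
      φ (Function.update p.1 (embX m k hkm l)
            (Complex.exp ((θ : ℂ) * Complex.I) * p.1 (embX m k hkm l)),
         Function.update p.2 l (Complex.exp ((θ : ℂ) * Complex.I) * p.2 l)) = φ p)
    (z : Fin (m + 1) → ℂ) (ζ : Fin (k + 1) → ℂ) (θ : Fin (k + 1) → ℝ) :
    φ (fun i => if (i : ℕ) ≤ k then Complex.exp ((θ (hdX m k i) : ℂ) * Complex.I) * z i else z i,
       fun j => Complex.exp ((θ j : ℂ) * Complex.I) * ζ j) = φ (z, ζ) := by
  have key : ∀ n : ℕ, n ≤ k + 1 →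
      φ (fun i => if (i : ℕ) < n then Complex.exp ((θ (hdX m k i) : ℂ) * Complex.I) * z i else z i,
         fun j => if (j : ℕ) < n then Complex.exp ((θ j : ℂ) * Complex.I) * ζ j else ζ j)
        = φ (z, ζ) := by
    intro n
    induction n with
    | zero => intro _; simp
    | succ n ih =>
      intro hn
      have hnk : n ≤ k := by omega
      set l : Fin (k + 1) := ⟨n, by omega⟩ with hl
      have hlv : (l : ℕ) = n := rfl
      have hvl : ((embX m k hkm l : Fin (m + 1)) : ℕ) = n := rfl
      have h1 : (fun i : Fin (m + 1) => if (i : ℕ) < n + 1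
            then Complex.exp ((θ (hdX m k i) : ℂ) * Complex.I) * z i else z i)
          = Function.update
              (fun i : Fin (m + 1) => if (i : ℕ) < n
                then Complex.exp ((θ (hdX m k i) : ℂ) * Complex.I) * z i else z i)
              (embX m k hkm l)
              (Complex.exp ((θ l : ℂ) * Complex.I) *
                (fun i : Fin (m + 1) => if (i : ℕ) < n
                  then Complex.exp ((θ (hdX m k i) : ℂ) * Complex.I) * z i else z i)
                  (embX m k hkm l)) := by
        funext i
        by_cases hi : i = embX m k hkm l
        · subst hi
          simp only [Function.update_self, hvl, hdX_embX hkm]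
          rw [if_pos (Nat.lt_succ_self n), if_neg (Nat.lt_irrefl n)]
        · have hi' : (i : ℕ) ≠ n := fun h => hi (Fin.ext (by rw [h, hvl]))
          rw [Function.update_of_ne hi]
          by_cases h2 : (i : ℕ) < n
          · rw [if_pos (by omega), if_pos h2]
          · rw [if_neg (by omega), if_neg h2]
      have h2 : (fun j : Fin (k + 1) => if (j : ℕ) < n + 1
            then Complex.exp ((θ j : ℂ) * Complex.I) * ζ j else ζ j)
          = Function.update
              (fun j : Fin (k + 1) => if (j : ℕ) < n
                then Complex.exp ((θ j : ℂ) * Complex.I) * ζ j else ζ j)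
              l
              (Complex.exp ((θ l : ℂ) * Complex.I) *
                (fun j : Fin (k + 1) => if (j : ℕ) < n
                  then Complex.exp ((θ j : ℂ) * Complex.I) * ζ j else ζ j) l) := by
        funext j
        by_cases hj : j = l
        · subst hj
          simp only [Function.update_self, hlv]
          rw [if_pos (Nat.lt_succ_self n), if_neg (Nat.lt_irrefl n)]
        · have hj' : (j : ℕ) ≠ n := fun h => hj (Fin.ext (h.trans hlv.symm))
          rw [Function.update_of_ne hj]
          by_cases h3 : (j : ℕ) < n
          · rw [if_pos (by omega), if_pos h3]
          · rw [if_neg (by omega), if_neg h3]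
      rw [h1, h2]
      exact (hG3 l (θ l)
        (fun i : Fin (m + 1) => if (i : ℕ) < n
            then Complex.exp ((θ (hdX m k i) : ℂ) * Complex.I) * z i else z i,
         fun j : Fin (k + 1) => if (j : ℕ) < n
            then Complex.exp ((θ j : ℂ) * Complex.I) * ζ j else ζ j)).trans (ih (by omega))
  have hthis := key (k + 1) le_rfl
  have hc1 : (fun i : Fin (m + 1) => if (i : ℕ) ≤ k
        then Complex.exp ((θ (hdX m k i) : ℂ) * Complex.I) * z i else z i)
      = (fun i : Fin (m + 1) => if (i : ℕ) < k + 1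
        then Complex.exp ((θ (hdX m k i) : ℂ) * Complex.I) * z i else z i) := by
    funext i
    exact if_congr (by omega) rfl rfl
  have hc2 : (fun j : Fin (k + 1) => Complex.exp ((θ j : ℂ) * Complex.I) * ζ j)
      = (fun j : Fin (k + 1) => if (j : ℕ) < k + 1
        then Complex.exp ((θ j : ℂ) * Complex.I) * ζ j else ζ j) := by
    funext j
    rw [if_pos j.isLt]
  rw [hc1, hc2]
  exact hthis

lemma FX_crvX_phase (hkm : k ≤ m) (φ : ((Fin (m + 1) → ℂ) × (Fin (k + 1) → ℂ)) → ℝ)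
    (hG3 : ∀ l : Fin (k + 1), ∀ θ : ℝ, ∀ p : (Fin (m + 1) → ℂ) × (Fin (k + 1) → ℂ),
      φ (Function.update p.1 (embX m k hkm l)
            (Complex.exp ((θ : ℂ) * Complex.I) * p.1 (embX m k hkm l)),
         Function.update p.2 l (Complex.exp ((θ : ℂ) * Complex.I) * p.2 l)) = φ p)
    (z : Fin (m + 1) → ℂ) (s d : Fin (k + 1) → ℝ) (t : ℂ) :
    FX m k φ (crvX m k z s d) t = FX m k φ (crvX m k z s d) (t.re : ℂ) := by
  have hexp : ∀ j : Fin (k + 1),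
      Complex.exp ((s j : ℂ) + (d j : ℂ) * t)
        = Complex.exp ((((fun j' => d j' * t.im) j : ℝ) : ℂ) * Complex.I) *
            Complex.exp ((s j : ℂ) + (d j : ℂ) * (t.re : ℂ)) := by
    intro j
    rw [← Complex.exp_add]
    congr 1
    nth_rewrite 1 [← Complex.re_add_im t]
    push_cast
    ring
  have hpt : crvX m k z s d t
      = (fun i : Fin (m + 1) => if (i : ℕ) ≤ k then
            Complex.exp ((((fun j' => d j' * t.im) (hdX m k i) : ℝ) : ℂ) * Complex.I) *
              (crvX m k z s d (t.re : ℂ)).1 i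
          else (crvX m k z s d (t.re : ℂ)).1 i,
         fun j : Fin (k + 1) =>
            Complex.exp ((((fun j' => d j' * t.im) j : ℝ) : ℂ) * Complex.I) *
              (crvX m k z s d (t.re : ℂ)).2 j) := by
    refine Prod.ext ?_ ?_
    · funext i
      by_cases hi : (i : ℕ) ≤ k
      · show (if (i : ℕ) ≤ k then Complex.exp ((s (hdX m k i) : ℂ) + (d (hdX m k i) : ℂ) * t)
            else z i) = _
        rw [if_pos hi]
        show _ = if (i : ℕ) ≤ k then _ * (crvX m k z s d (t.re : ℂ)).1 i
            else (crvX m k z s d (t.re : ℂ)).1 i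
        rw [if_pos hi]
        show _ = _ * (if (i : ℕ) ≤ k then
            Complex.exp ((s (hdX m k i) : ℂ) + (d (hdX m k i) : ℂ) * (t.re : ℂ)) else z i)
        rw [if_pos hi]
        exact hexp (hdX m k i)
      · show (if (i : ℕ) ≤ k then _ else z i)
            = if (i : ℕ) ≤ k then _ else (crvX m k z s d (t.re : ℂ)).1 i
        rw [if_neg hi, if_neg hi]
        show z i = if (i : ℕ) ≤ k then _ else z i
        rw [if_neg hi]
    · funext j
      exact hexp j
  have hφeq : φ (crvX m k z s d t) = φ (crvX m k z s d (t.re : ℂ)) := by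
    calc φ (crvX m k z s d t)
        = φ ((crvX m k z s d (t.re : ℂ)).1, (crvX m k z s d (t.re : ℂ)).2) := by
          rw [hpt]
          exact phase_invX hkm φ hG3 (crvX m k z s d (t.re : ℂ)).1
            (crvX m k z s d (t.re : ℂ)).2 (fun j' => d j' * t.im)
      _ = φ (crvX m k z s d (t.re : ℂ)) := by rw [Prod.mk.eta]
  have habs1 : nsq (crvX m k z s d t).1 = nsq (crvX m k z s d (t.re : ℂ)).1 := by
    unfold nsq
    refine Finset.sum_congr rfl fun i _ => ?_
    congr 1
    by_cases hi : (i : ℕ) ≤ k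
    · show ‖if (i : ℕ) ≤ k then _ else _‖
        = ‖if (i : ℕ) ≤ k then _ else _‖
      rw [if_pos hi, if_pos hi, Complex.norm_exp, Complex.norm_exp]
      congr 1
      simp
    · show ‖if (i : ℕ) ≤ k then _ else z i‖
        = ‖if (i : ℕ) ≤ k then _ else z i‖
      rw [if_neg hi, if_neg hi]
  have habs2 : nsq (crvX m k z s d t).2 = nsq (crvX m k z s d (t.re : ℂ)).2 := by
    unfold nsq
    refine Finset.sum_congr rfl fun j _ => ?_
    congr 1
    show ‖Complex.exp _‖ = ‖Complex.exp _‖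
    rw [Complex.norm_exp, Complex.norm_exp]
    congr 1
    simp
  unfold FX
  rw [hφeq, habs1, habs2]

lemma crvX_FX_convex (hkm : k ≤ m) (φ : ((Fin (m + 1) → ℂ) × (Fin (k + 1) → ℂ)) → ℝ)
    (hadm : AdmX m k hkm φ)
    (hG3 : ∀ l : Fin (k + 1), ∀ θ : ℝ, ∀ p : (Fin (m + 1) → ℂ) × (Fin (k + 1) → ℂ),
      φ (Function.update p.1 (embX m k hkm l)
            (Complex.exp ((θ : ℂ) * Complex.I) * p.1 (embX m k hkm l)),
         Function.update p.2 l (Complex.exp ((θ : ℂ) * Complex.I) * p.2 l)) = φ p)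
    (z : Fin (m + 1) → ℂ) (s d : Fin (k + 1) → ℝ) :
    ConvexOn ℝ Set.univ (fun xr : ℝ => FX m k φ (crvX m k z s d) (xr : ℂ)) := by
  set c := crvX m k z s d with hc
  set G := FX m k φ c with hGdef
  set g : ℝ → ℝ := fun xr => G (xr : ℂ) with hgdef
  have hGg : ∀ t : ℂ, G t = g t.re := fun t => FX_crvX_phase hkm φ hG3 z s d t
  have hball : ∀ r : ℝ, 0 < r → ContDiffOn ℝ (⊤ : ℕ∞) G (Metric.ball 0 r) ∧
      (∀ t ∈ Metric.ball (0 : ℂ) r, 0 ≤ lap G t) := by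
    intro r hr
    obtain ⟨hh1, hh2, _⟩ := hadm r hr c (crvX_diff z s d).differentiableOn
      (fun t _ => crvX_inXhat hkm z s d t)
    exact ⟨hh1, hh2⟩
  have hmem : ∀ t : ℂ, t ∈ Metric.ball (0 : ℂ) (‖t‖ + 1) := by
    intro t
    simp only [Metric.mem_ball, dist_zero_right]
    linarith
  have hGat : ∀ t : ℂ, ContDiffAt ℝ (⊤ : ℕ∞) G t := fun t =>
    ((hball _ (by positivity)).1.contDiffAt (Metric.isOpen_ball.mem_nhds (hmem t)))
  have hlapG : ∀ t : ℂ, 0 ≤ lap G t := fun t =>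
    (hball _ (by positivity)).2 t (hmem t)
  have hg : ContDiff ℝ (⊤ : ℕ∞) g := by
    rw [contDiff_iff_contDiffAt]
    intro x
    have h1 : ContDiffAt ℝ (⊤ : ℕ∞) (G ∘ (Complex.ofRealCLM : ℝ →L[ℝ] ℂ)) x :=
      (hGat (x : ℂ)).comp x (Complex.ofRealCLM.contDiff.contDiffAt)
    exact h1.congr_of_eventuallyEq (Filter.Eventually.of_forall fun y => rfl)
  have hline1 : ∀ w : ℂ, lineDeriv ℝ G w 1 = deriv g w.re := by
    intro w
    have e1 : (fun r : ℝ => G (w + r • (1 : ℂ))) = fun r : ℝ => g (w.re + r) := by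
      funext r
      rw [hGg]
      congr 1
      simp
    show deriv (fun r : ℝ => G (w + r • (1 : ℂ))) 0 = _
    rw [e1, deriv_comp_const_add]
    norm_num
  have hlineI : ∀ w : ℂ, lineDeriv ℝ G w Complex.I = 0 := by
    intro w
    have e1 : (fun r : ℝ => G (w + r • Complex.I)) = fun _ : ℝ => g w.re := by
      funext r
      rw [hGg]
      congr 1
      simp [Complex.add_re, Complex.smul_re]
    show deriv (fun r : ℝ => G (w + r • Complex.I)) 0 = 0
    rw [e1, deriv_const]
  have hlap_eq : ∀ x : ℝ, lap G (x : ℂ) = deriv (deriv g) x := by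
    intro x
    unfold lap
    have h1 : (fun w : ℂ => lineDeriv ℝ G w 1) = fun w : ℂ => deriv g w.re := funext hline1
    have h2 : (fun w : ℂ => lineDeriv ℝ G w Complex.I) = fun _ : ℂ => (0 : ℝ) := funext hlineI
    rw [h1, h2]
    have h3 : lineDeriv ℝ (fun _ : ℂ => (0 : ℝ)) (x : ℂ) Complex.I = 0 := by
      show deriv (fun _ : ℝ => (0 : ℝ)) 0 = 0
      exact deriv_const _ _
    rw [h3, add_zero]
    show deriv (fun r : ℝ => deriv g (((x : ℂ) + r • (1 : ℂ)).re)) 0 = _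
    have e1 : (fun r : ℝ => deriv g (((x : ℂ) + r • (1 : ℂ)).re)) = fun r : ℝ => deriv g (x + r) := by
      funext r
      congr 1
      simp
    rw [e1, deriv_comp_const_add]
    norm_num
  have hdd : ∀ x : ℝ, 0 ≤ deriv (deriv g) x := by
    intro x
    rw [← hlap_eq x]
    exact hlapG _
  have hg' : ContDiff ℝ (((⊤ : ℕ∞) : WithTop ℕ∞)) g := hg.of_le (by simp)
  have hconv : ConvexOn ℝ Set.univ g := by
    apply convexOn_of_deriv2_nonneg convex_univ hg'.continuous.continuousOn
    · exact (hg'.differentiable (by norm_num)).differentiableOn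
    · have hdg : ContDiff ℝ (((⊤ : ℕ∞) : WithTop ℕ∞)) (deriv g) := (contDiff_infty_iff_deriv.mp hg').2
      exact (hdg.differentiable (by norm_num)).differentiableOn
    · intro x _
      have : deriv^[2] g x = deriv (deriv g) x := by
        simp [Function.iterate_succ, Function.iterate_zero, Function.comp]
      rw [this]
      exact hdd x
  exact hconv

lemma Fq_convexOn (hkm : k ≤ m) (φ : ((Fin (m + 1) → ℂ) × (Fin (k + 1) → ℂ)) → ℝ)
    (hadm : AdmX m k hkm φ)
    (hG3 : ∀ l : Fin (k + 1), ∀ θ : ℝ, ∀ p : (Fin (m + 1) → ℂ) × (Fin (k + 1) → ℂ),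
      φ (Function.update p.1 (embX m k hkm l)
            (Complex.exp ((θ : ℂ) * Complex.I) * p.1 (embX m k hkm l)),
         Function.update p.2 l (Complex.exp ((θ : ℂ) * Complex.I) * p.2 l)) = φ p)
    (z : Fin (m + 1) → ℂ) :
    ConvexOn ℝ Set.univ (Fq m k φ z) := by
  refine ⟨convex_univ, fun a _ b _ la lb hla hlb hs => ?_⟩
  have hcv := crvX_FX_convex hkm φ hadm hG3 z a (fun j => b j - a j)
  have hg : ∀ xr : ℝ, FX m k φ (crvX m k z a (fun j => b j - a j)) (xr : ℂ)
      = Fq m k φ z (fun j => a j + (b j - a j) * xr) := by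
    intro xr
    unfold FX Fq
    rw [crvX_real]
  set Gf : ℝ → ℝ := fun xr : ℝ => FX m k φ (crvX m k z a (fun j => b j - a j)) (xr : ℂ) with hGf
  have hkey := hcv.2 (Set.mem_univ (0 : ℝ)) (Set.mem_univ (1 : ℝ)) hla hlb hs
  have h01 : la • (0 : ℝ) + lb • (1 : ℝ) = lb := by simp
  rw [h01] at hkey
  have e_lb : Gf lb = Fq m k φ z (fun j => a j + (b j - a j) * lb) := hg lb
  have h0 : Gf 0 = Fq m k φ z a := by
    rw [show Gf (0 : ℝ) = Fq m k φ z (fun j => a j + (b j - a j) * 0) from hg 0]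
    congr 1
    funext j
    ring
  have h1 : Gf 1 = Fq m k φ z b := by
    rw [show Gf (1 : ℝ) = Fq m k φ z (fun j => a j + (b j - a j) * 1) from hg 1]
    congr 1
    funext j
    ring
  rw [e_lb, h0, h1] at hkey
  have harg : (fun j => a j + (b j - a j) * lb) = la • a + lb • b := by
    funext j
    have hla' : la = 1 - lb := by linarith
    simp only [Pi.add_apply, Pi.smul_apply, smul_eq_mul, hla']
    ring
  rw [harg] at hkey
  exact hkey

lemma Fq_mean (hkm : k ≤ m) (φ : ((Fin (m + 1) → ℂ) × (Fin (k + 1) → ℂ)) → ℝ)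
    (z : Fin (m + 1) → ℂ)
    (hconv : ConvexOn ℝ Set.univ (Fq m k φ z))
    (hperm : ∀ σ : Equiv.Perm (Fin (k + 1)), ∀ s : Fin (k + 1) → ℝ,
      Fq m k φ z (s ∘ σ) = Fq m k φ z s)
    (s : Fin (k + 1) → ℝ) :
    Fq m k φ z (fun _ => (∑ j, s j) / ((k : ℝ) + 1)) ≤ Fq m k φ z s := by
  set N := Fintype.card (Equiv.Perm (Fin (k + 1))) with hN
  have hN0 : 0 < (N : ℝ) := by
    have : 0 < N := Fintype.card_pos
    exact_mod_cast this
  set w : Equiv.Perm (Fin (k + 1)) → ℝ := fun _ => 1 / (N : ℝ) with hw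
  have hw0 : ∀ σ ∈ Finset.univ (α := Equiv.Perm (Fin (k + 1))), 0 ≤ w σ := fun _ _ => by positivity
  have hw1 : ∑ σ : Equiv.Perm (Fin (k + 1)), w σ = 1 := by
    rw [Finset.sum_const, Finset.card_univ, ← hN, nsmul_eq_mul]
    field_simp
  have hTconst : ∀ i : Fin (k + 1), ∑ σ : Equiv.Perm (Fin (k + 1)), s (σ i)
      = (N : ℝ) * (∑ j, s j) / ((k : ℝ) + 1) := by
    intro i
    have hA : ∀ i' : Fin (k + 1), ∑ σ : Equiv.Perm (Fin (k + 1)), s (σ i')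
        = ∑ σ : Equiv.Perm (Fin (k + 1)), s (σ i) := by
      intro i'
      have := Equiv.sum_comp (Equiv.mulRight (Equiv.swap i i'))
        (fun σ : Equiv.Perm (Fin (k + 1)) => s (σ i))
      calc ∑ σ : Equiv.Perm (Fin (k + 1)), s (σ i')
          = ∑ σ : Equiv.Perm (Fin (k + 1)), s ((Equiv.mulRight (Equiv.swap i i') σ) i) := by
            refine Finset.sum_congr rfl fun σ _ => ?_
            congr 1
            show σ i' = (σ * Equiv.swap i i') i
            rw [Equiv.Perm.mul_apply, Equiv.swap_apply_left]
        _ = ∑ σ : Equiv.Perm (Fin (k + 1)), s (σ i) := this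
    have hB : ∑ i' : Fin (k + 1), ∑ σ : Equiv.Perm (Fin (k + 1)), s (σ i')
        = (N : ℝ) * ∑ j, s j := by
      rw [Finset.sum_comm]
      have : ∀ σ : Equiv.Perm (Fin (k + 1)), ∑ i' : Fin (k + 1), s (σ i') = ∑ j, s j :=
        fun σ => Equiv.sum_comp σ s
      rw [Finset.sum_congr rfl fun σ _ => this σ, Finset.sum_const, Finset.card_univ]
      rw [nsmul_eq_mul]
    have hB2 : ∑ i' : Fin (k + 1), ∑ σ : Equiv.Perm (Fin (k + 1)), s (σ i')
        = ((k : ℝ) + 1) * ∑ σ : Equiv.Perm (Fin (k + 1)), s (σ i) := by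
      rw [Finset.sum_congr rfl fun i' _ => hA i', Finset.sum_const, Finset.card_univ]
      rw [Fintype.card_fin, nsmul_eq_mul]
      push_cast
      ring
    have hk1 : ((k : ℝ) + 1) ≠ 0 := by positivity
    field_simp
    linarith [hB.symm.trans hB2]
  have hmean : (∑ σ : Equiv.Perm (Fin (k + 1)), w σ • (s ∘ σ))
      = (fun _ : Fin (k + 1) => (∑ j, s j) / ((k : ℝ) + 1)) := by
    funext i
    rw [Finset.sum_apply]
    have : ∀ σ : Equiv.Perm (Fin (k + 1)), (w σ • (s ∘ σ)) i = (1 / (N : ℝ)) * s (σ i) :=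
      fun σ => rfl
    rw [Finset.sum_congr rfl fun σ _ => this σ, ← Finset.mul_sum, hTconst i]
    field_simp
  have hjen := hconv.map_sum_le hw0 hw1 (fun σ _ => Set.mem_univ (s ∘ σ))
  rw [hmean] at hjen
  calc Fq m k φ z (fun _ : Fin (k + 1) => (∑ j, s j) / ((k : ℝ) + 1))
      ≤ ∑ σ : Equiv.Perm (Fin (k + 1)), w σ • Fq m k φ z (s ∘ σ) := hjen
    _ = ∑ σ : Equiv.Perm (Fin (k + 1)), w σ • Fq m k φ z s := by
        refine Finset.sum_congr rfl fun σ _ => ?_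
        rw [hperm σ s]
    _ = Fq m k φ z s := by
        rw [← Finset.sum_smul, hw1, one_smul]

lemma psiX1_expand (p : (Fin (m + 1) → ℂ) × (Fin (k + 1) → ℂ))
    (h1 : 0 < ∏ i ∈ Finset.univ.filter (fun i : Fin (m + 1) => (i : ℕ) ≤ k), ‖p.1 i‖)
    (h2 : 0 < ∏ j : Fin (k + 1), ‖p.2 j‖)
    (h3 : 0 < nsq p.1) (h4 : 0 < nsq p.2) :
    psiX1 m k p
      = (2 * ((m : ℝ) + 1 - (k : ℝ)) / ((k : ℝ) + 1)) *
          Real.log (∏ i ∈ Finset.univ.filter (fun i : Fin (m + 1) => (i : ℕ) ≤ k),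
            ‖p.1 i‖)
        + (2 * (k : ℝ) / ((k : ℝ) + 1)) * Real.log (∏ j : Fin (k + 1), ‖p.2 j‖)
        - (((m : ℝ) + 1 - (k : ℝ)) * Real.log (nsq p.1) + (k : ℝ) * Real.log (nsq p.2)) := by
  unfold psiX1
  rw [Real.log_div
      (mul_pos (Real.rpow_pos_of_pos h1 _) (Real.rpow_pos_of_pos h2 _)).ne'
      (mul_pos (Real.rpow_pos_of_pos h3 _) (Real.rpow_pos_of_pos h4 _)).ne',
    Real.log_mul (Real.rpow_pos_of_pos h1 _).ne' (Real.rpow_pos_of_pos h2 _).ne',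
    Real.log_mul (Real.rpow_pos_of_pos h3 _).ne' (Real.rpow_pos_of_pos h4 _).ne',
    Real.log_rpow h1, Real.log_rpow h2, Real.log_rpow h3, Real.log_rpow h4]

lemma psiX2_expand (p : (Fin (m + 1) → ℂ) × (Fin (k + 1) → ℂ))
    (h1 : 0 < ∏ i ∈ Finset.univ.filter (fun i : Fin (m + 1) => k + 1 ≤ (i : ℕ)),
      ‖p.1 i‖)
    (h2 : 0 < ∏ j : Fin (k + 1), ‖p.2 j‖)
    (h3 : 0 < nsq p.1) (h4 : 0 < nsq p.2) :
    psiX2 m k p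
      = (2 * ((m : ℝ) + 1 - (k : ℝ)) / ((m : ℝ) - (k : ℝ))) *
          Real.log (∏ i ∈ Finset.univ.filter (fun i : Fin (m + 1) => k + 1 ≤ (i : ℕ)),
            ‖p.1 i‖)
        + (2 * (k : ℝ) / ((k : ℝ) + 1)) * Real.log (∏ j : Fin (k + 1), ‖p.2 j‖)
        - (((m : ℝ) + 1 - (k : ℝ)) * Real.log (nsq p.1) + (k : ℝ) * Real.log (nsq p.2)) := by
  unfold psiX2
  rw [Real.log_div
      (mul_pos (Real.rpow_pos_of_pos h1 _) (Real.rpow_pos_of_pos h2 _)).ne'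
      (mul_pos (Real.rpow_pos_of_pos h3 _) (Real.rpow_pos_of_pos h4 _)).ne',
    Real.log_mul (Real.rpow_pos_of_pos h1 _).ne' (Real.rpow_pos_of_pos h2 _).ne',
    Real.log_mul (Real.rpow_pos_of_pos h3 _).ne' (Real.rpow_pos_of_pos h4 _).ne',
    Real.log_rpow h1, Real.log_rpow h2, Real.log_rpow h3, Real.log_rpow h4]

end AuxStmt11

theorem stmt11 (m k : ℕ) (hm : 2 ≤ m) (hk : 1 ≤ k) (hkm : k ≤ m - 1)
    (φ : ((Fin (m + 1) → ℂ) × (Fin (k + 1) → ℂ)) → ℝ)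
    (hcont : ContinuousOn φ {p | inXhat m k (by omega) p})
    (hscal : BiScalInv m k φ) (hG : GInvX m k (by omega) φ)
    (hadm : AdmX m k (by omega) φ)
    (x : Fin (m + 1) → ℝ) (hx : ∀ i, 0 < x i) :
    let zA : Fin (m + 1) → ℂ := fun i => if (i : ℕ) = k + 1 then 1 else (x i : ℂ)
    let ζA : Fin (k + 1) → ℂ := fun j => zA (embX m k (by omega) j)
    let ηv : ℝ := (∏ i ∈ Finset.univ.filter (fun i : Fin (m + 1) => (i : ℕ) ≤ k), x i) ^
      (1 / ((k : ℝ) + 1))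
    let zB : Fin (m + 1) → ℂ := fun i => if (i : ℕ) ≤ k then (ηv : ℂ) else zA i
    let oneζ : Fin (k + 1) → ℂ := fun _ => 1
    φ (zB, oneζ) - psiX m k (zB, oneζ) ≤ φ (zA, ζA) - psiX m k (zA, ζA) := by
  intro zA ζA ηv zB oneζ
  have hkm' : k ≤ m := by omega
  have hzA : zA = fun i : Fin (m + 1) => if (i : ℕ) = k + 1 then 1 else ((x i : ℝ) : ℂ) := rfl
  have hzB : zB = fun i : Fin (m + 1) => if (i : ℕ) ≤ k then ((ηv : ℝ) : ℂ) else zA i := rfl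
  have honeζ : oneζ = fun _ : Fin (k + 1) => (1 : ℂ) := rfl
  have hζA : ∀ j : Fin (k + 1), ζA j = ((x (embX m k hkm' j) : ℝ) : ℂ) := by
    intro j
    show zA (embX m k hkm' j) = _
    rw [hzA]
    have hne : ((embX m k hkm' j : Fin (m + 1)) : ℕ) ≠ k + 1 := by
      have := j.isLt; simp [embX]; omega
    exact if_neg hne
  have hzA_head : ∀ i : Fin (m + 1), (i : ℕ) ≤ k → zA i = ((x i : ℝ) : ℂ) := by
    intro i hi
    rw [hzA]
    exact if_neg (by omega)
  have hzA_ne : ∀ i, zA i ≠ 0 := by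
    intro i
    rw [hzA]
    dsimp only
    split
    · exact one_ne_zero
    · exact Complex.ofReal_ne_zero.mpr (hx i).ne'
  set P : ℝ := ∏ i ∈ Finset.univ.filter (fun i : Fin (m + 1) => (i : ℕ) ≤ k), x i with hPdef
  have hηv : ηv = P ^ (1 / ((k : ℝ) + 1)) := rfl
  have hP : 0 < P := Finset.prod_pos fun i _ => hx i
  have hη : 0 < ηv := by rw [hηv]; positivity
  have hηP : ηv ^ (k + 1) = P := by
    rw [hηv, ← Real.rpow_natCast (P ^ (1 / ((k : ℝ) + 1))) (k + 1), ← Real.rpow_mul hP.le,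
      show (1 / ((k : ℝ) + 1)) * ((k + 1 : ℕ) : ℝ) = 1 by push_cast; field_simp,
      Real.rpow_one]
  have hzB_ne : ∀ i, zB i ≠ 0 := by
    intro i
    rw [hzB]
    dsimp only
    split
    · exact Complex.ofReal_ne_zero.mpr hη.ne'
    · exact hzA_ne i
  set ηζ : Fin (k + 1) → ℂ := fun _ => ((ηv : ℝ) : ℂ) with hηζ
  set sA : Fin (k + 1) → ℝ := fun j => Real.log (x (embX m k hkm' j)) with hsA
  set sB : Fin (k + 1) → ℝ := fun _ => Real.log ηv with hsB
  have hQA : Qpt m k zA sA = (zA, ζA) := by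
    refine Prod.ext ?_ ?_
    · funext i
      by_cases hi : (i : ℕ) ≤ k
      · show (if (i : ℕ) ≤ k then
            Complex.exp ((Real.log (x (embX m k hkm' (hdX m k i))) : ℂ)) else zA i) = zA i
        rw [if_pos hi, embX_hdX hkm' i hi, hzA_head i hi, ← Complex.ofReal_exp,
          Real.exp_log (hx i)]
      · show (if (i : ℕ) ≤ k then
            Complex.exp ((Real.log (x (embX m k hkm' (hdX m k i))) : ℂ)) else zA i) = zA i
        rw [if_neg hi]
    · funext j
      show Complex.exp ((Real.log (x (embX m k hkm' j)) : ℂ)) = ζA j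
      rw [hζA j, ← Complex.ofReal_exp, Real.exp_log (hx _)]
  have hQB : Qpt m k zA sB = (zB, ηζ) := by
    refine Prod.ext ?_ ?_
    · funext i
      by_cases hi : (i : ℕ) ≤ k
      · show (if (i : ℕ) ≤ k then Complex.exp ((Real.log ηv : ℂ)) else zA i) = zB i
        rw [if_pos hi, hzB]
        dsimp only
        rw [if_pos hi, ← Complex.ofReal_exp, Real.exp_log hη]
      · show (if (i : ℕ) ≤ k then Complex.exp ((Real.log ηv : ℂ)) else zA i) = zB i
        rw [if_neg hi, hzB]
        dsimp only
        rw [if_neg hi]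
    · funext j
      show Complex.exp ((Real.log ηv : ℂ)) = ((ηv : ℝ) : ℂ)
      rw [← Complex.ofReal_exp, Real.exp_log hη]
  have hPA1 : (∏ i ∈ Finset.univ.filter (fun i : Fin (m + 1) => (i : ℕ) ≤ k),
      ‖zA i‖) = P := by
    rw [hPdef]
    refine Finset.prod_congr rfl fun i hi => ?_
    rw [Finset.mem_filter] at hi
    rw [hzA_head i hi.2, Complex.norm_real, Real.norm_of_nonneg (hx i).le]
  have hcard : (∏ _i ∈ Finset.univ.filter (fun i : Fin (m + 1) => (i : ℕ) ≤ k), ηv)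
      = ηv ^ (k + 1) := by
    rw [prod_head hkm' (fun _ => ηv), Finset.prod_const, Finset.card_univ, Fintype.card_fin]
  have hPB1 : (∏ i ∈ Finset.univ.filter (fun i : Fin (m + 1) => (i : ℕ) ≤ k),
      ‖zB i‖) = P := by
    rw [← hηP, ← hcard]
    refine Finset.prod_congr rfl fun i hi => ?_
    rw [Finset.mem_filter] at hi
    rw [hzB]
    dsimp only
    rw [if_pos hi.2, Complex.norm_real, Real.norm_of_nonneg hη.le]
  have hζAprod : (∏ j : Fin (k + 1), ‖ζA j‖) = P := by
    have h1 : ∀ j : Fin (k + 1), ‖ζA j‖ = x (embX m k hkm' j) := fun j => by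
      rw [hζA j, Complex.norm_real, Real.norm_of_nonneg (hx _).le]
    rw [Finset.prod_congr rfl fun j _ => h1 j, ← prod_head hkm' x, ← hPdef]
  have hηζprod : (∏ j : Fin (k + 1), ‖ηζ j‖) = P := by
    have h1 : ∀ j : Fin (k + 1), ‖ηζ j‖ = ηv := fun j => by
      show ‖((ηv : ℝ) : ℂ)‖ = ηv
      rw [Complex.norm_real, Real.norm_of_nonneg hη.le]
    rw [Finset.prod_congr rfl fun j _ => h1 j, Finset.prod_const, Finset.card_univ,
      Fintype.card_fin, hηP]
  have honeprod : (∏ j : Fin (k + 1), ‖oneζ j‖) = 1 := by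
    have h1 : ∀ j : Fin (k + 1), ‖oneζ j‖ = 1 := fun j => by
      show ‖(1 : ℂ)‖ = 1
      exact norm_one
    rw [Finset.prod_congr rfl fun j _ => h1 j, Finset.prod_const, one_pow]
  set TT : ℝ := ∏ i ∈ Finset.univ.filter (fun i : Fin (m + 1) => k + 1 ≤ (i : ℕ)),
      ‖zA i‖ with hTT
  have hTpos : 0 < TT := by
    rw [hTT]
    exact Finset.prod_pos fun i _ => norm_pos_iff.mpr (hzA_ne i)
  have hTB : (∏ i ∈ Finset.univ.filter (fun i : Fin (m + 1) => k + 1 ≤ (i : ℕ)),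
      ‖zB i‖) = TT := by
    rw [hTT]
    refine Finset.prod_congr rfl fun i hi => ?_
    rw [Finset.mem_filter] at hi
    rw [hzB]
    dsimp only
    rw [if_neg (by omega)]
  have hnsq_zA : 0 < nsq zA := nsq_pos zA hzA_ne
  have hnsq_zB : 0 < nsq zB := nsq_pos zB hzB_ne
  have hnsq_ζA : 0 < nsq ζA := nsq_pos ζA fun j => by
    rw [hζA j]; exact Complex.ofReal_ne_zero.mpr (hx _).ne'
  have hnsq_one : 0 < nsq oneζ := nsq_pos oneζ fun j => by
    show (1 : ℂ) ≠ 0; exact one_ne_zero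
  have hnsq_ηζ_pos : 0 < nsq ηζ := nsq_pos ηζ fun j => by
    show ((ηv : ℝ) : ℂ) ≠ 0; exact Complex.ofReal_ne_zero.mpr hη.ne'
  have hnsq_ηζ : nsq ηζ = ηv ^ 2 * nsq oneζ := by
    unfold nsq
    rw [Finset.mul_sum]
    refine Finset.sum_congr rfl fun j _ => ?_
    show ‖((ηv : ℝ) : ℂ)‖ ^ 2 = ηv ^ 2 * ‖oneζ j‖ ^ 2
    rw [honeζ]
    dsimp only
    rw [Complex.norm_real, Real.norm_of_nonneg hη.le, norm_one, one_pow, mul_one]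
  have hlogP : Real.log P = ((k : ℝ) + 1) * Real.log ηv := by
    rw [← hηP, Real.log_pow]
    push_cast
    ring
  have hq2 : (2 * (k : ℝ) / ((k : ℝ) + 1)) * Real.log P = 2 * (k : ℝ) * Real.log ηv := by
    rw [hlogP]
    have hk1 : ((k : ℝ) + 1) ≠ 0 := by positivity
    field_simp
  have hlogηζ : Real.log (nsq ηζ) = 2 * Real.log ηv + Real.log (nsq oneζ) := by
    rw [hnsq_ηζ, Real.log_mul (pow_ne_zero 2 hη.ne') hnsq_one.ne', Real.log_pow]
    push_cast
    ring
  have EA1 := psiX1_expand (m := m) (k := k) (zA, ζA)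
    (lt_of_lt_of_eq hP hPA1.symm) (lt_of_lt_of_eq hP hζAprod.symm) hnsq_zA hnsq_ζA
  dsimp only at EA1
  rw [hPA1, hζAprod] at EA1
  have EB1 := psiX1_expand (m := m) (k := k) (zB, ηζ)
    (lt_of_lt_of_eq hP hPB1.symm) (lt_of_lt_of_eq hP hηζprod.symm) hnsq_zB hnsq_ηζ_pos
  dsimp only at EB1
  rw [hPB1, hηζprod] at EB1
  have E01 := psiX1_expand (m := m) (k := k) (zB, oneζ)
    (lt_of_lt_of_eq hP hPB1.symm) (lt_of_lt_of_eq one_pos honeprod.symm) hnsq_zB hnsq_one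
  dsimp only at E01
  rw [hPB1, honeprod, Real.log_one] at E01
  have EA2 := psiX2_expand (m := m) (k := k) (zA, ζA)
    (lt_of_lt_of_eq hTpos hTT) (lt_of_lt_of_eq hP hζAprod.symm) hnsq_zA hnsq_ζA
  dsimp only at EA2
  rw [← hTT, hζAprod] at EA2
  have EB2 := psiX2_expand (m := m) (k := k) (zB, ηζ)
    (lt_of_lt_of_eq hTpos hTB.symm) (lt_of_lt_of_eq hP hηζprod.symm) hnsq_zB hnsq_ηζ_pos
  dsimp only at EB2
  rw [hTB, hηζprod] at EB2
  have E02 := psiX2_expand (m := m) (k := k) (zB, oneζ)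
    (lt_of_lt_of_eq hTpos hTB.symm) (lt_of_lt_of_eq one_pos honeprod.symm) hnsq_zB hnsq_one
  dsimp only at E02
  rw [hTB, honeprod, Real.log_one] at E02
  have c1 : psiX1 m k (zB, oneζ) = psiX1 m k (zB, ηζ) := by
    rw [E01, EB1, hlogηζ]
    linear_combination -hq2
  have c2 : psiX2 m k (zB, oneζ) = psiX2 m k (zB, ηζ) := by
    rw [E02, EB2, hlogηζ]
    linear_combination -hq2
  have hmin0 : psiX m k (zB, oneζ) = psiX m k (zB, ηζ) := by
    unfold psiX
    rw [c1, c2]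
  have d1 : psiX1 m k (zA, ζA) +
        (((m : ℝ) + 1 - (k : ℝ)) * Real.log (nsq zA) + (k : ℝ) * Real.log (nsq ζA))
      = psiX1 m k (zB, ηζ) +
        (((m : ℝ) + 1 - (k : ℝ)) * Real.log (nsq zB) + (k : ℝ) * Real.log (nsq ηζ)) := by
    rw [EA1, EB1]
    ring
  have d2 : psiX2 m k (zA, ζA) +
        (((m : ℝ) + 1 - (k : ℝ)) * Real.log (nsq zA) + (k : ℝ) * Real.log (nsq ζA))
      = psiX2 m k (zB, ηζ) +
        (((m : ℝ) + 1 - (k : ℝ)) * Real.log (nsq zB) + (k : ℝ) * Real.log (nsq ηζ)) := by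
    rw [EA2, EB2]
    ring
  have dmin : psiX m k (zA, ζA) +
        (((m : ℝ) + 1 - (k : ℝ)) * Real.log (nsq zA) + (k : ℝ) * Real.log (nsq ζA))
      = psiX m k (zB, ηζ) +
        (((m : ℝ) + 1 - (k : ℝ)) * Real.log (nsq zB) + (k : ℝ) * Real.log (nsq ηζ)) := by
    unfold psiX
    rw [← min_add_add_right, ← min_add_add_right, d1, d2]
  have hconvF : ConvexOn ℝ Set.univ (Fq m k φ zA) := Fq_convexOn hkm' φ hadm hG.2.2.1 zA
  have hpermF : ∀ σ : Equiv.Perm (Fin (k + 1)), ∀ s, Fq m k φ zA (s ∘ σ) = Fq m k φ zA s :=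
    fun σ s => Fq_perm hkm' φ hG.1 zA σ s
  have hsum : ∑ j, sA j = Real.log P := by
    rw [hsA]
    dsimp only
    rw [← Real.log_prod (fun j _ => (hx _).ne'), ← prod_head hkm' x, ← hPdef]
  have hmean := Fq_mean hkm' φ zA hconvF hpermF sA
  have hmeanB : (fun _ : Fin (k + 1) => (∑ j, sA j) / ((k : ℝ) + 1)) = sB := by
    funext j'
    rw [hsum, hsB]
    dsimp only
    rw [hηv, Real.log_rpow hP]
    ring
  rw [hmeanB] at hmean
  have eFA : Fq m k φ zA sA
      = (((m : ℝ) + 1 - (k : ℝ)) * Real.log (nsq zA) + (k : ℝ) * Real.log (nsq ζA))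
        + φ (zA, ζA) := by
    unfold Fq
    rw [hQA]
  have eFB : Fq m k φ zA sB
      = (((m : ℝ) + 1 - (k : ℝ)) * Real.log (nsq zB) + (k : ℝ) * Real.log (nsq ηζ))
        + φ (zB, ηζ) := by
    unfold Fq
    rw [hQB]
  rw [eFA, eFB] at hmean
  have hφB : φ (zB, ηζ) = φ (zB, oneζ) := by
    have h := hscal 1 ((ηv : ℝ) : ℂ) one_ne_zero (Complex.ofReal_ne_zero.mpr hη.ne') (zB, oneζ)
    dsimp only at h
    rw [one_smul] at h
    have h2 : ((ηv : ℝ) : ℂ) • oneζ = ηζ := by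
      funext j
      show ((ηv : ℝ) : ℂ) * oneζ j = ((ηv : ℝ) : ℂ)
      rw [honeζ]
      dsimp only
      rw [mul_one]
    rw [h2] at h
    exact h
  linarith [hmean, dmin, hmin0, hφB]
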